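/- Proposition 1: if S1 ⊆ [K] and S2 ⊆ [K] are both decodable sets, then S1 ∪ S2 is a decodable set. -/

import Mathlib

/-!
Write `S = S1 ∪ S2` and split `T ⊆ S` into `T1 = T ∩ S1` and `T2 = T \ S1 ⊆ S2`. By the chain rule
`I(X_T; Y1 | X_{S\T}, Q) = I(X_{T1}; Y1 | X_{S\T}, Q) + I(X_{T2}; Y1 | X_{T1 ∪ S\T}, Q)`.
The inputs are conditionally independent given `Q`, so conditioning on more inputs can only
increase what a disjoint set of inputs tells about `Y1`. As `S1 \ T1 ⊆ S \ T` and
`S2 \ T2 ⊆ T1 ∪ S \ T`, the two terms dominate `I(X_{T1}; Y1 | X_{S1\T1}, Q) ≥ R_{T1}` and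
`I(X_{T2}; Y1 | X_{S2\T2}, Q) ≥ R_{T2}`.
-/

open scoped BigOperators
open Filter

set_option synthInstance.maxSize 4000
set_option synthInstance.maxHeartbeats 1000000
set_option maxHeartbeats 1000000

noncomputable section

/-- Shannon entropy (base 2) of a finitely supported distribution `p`. -/
def ent {α : Type*} [Fintype α] (p : α → ℝ) : ℝ := -∑ a, p a * Real.logb 2 (p a)

/-- The distribution (pushforward) of a random variable `f` on the finite
probability space `(Ω, p)`. -/
def distOf {Ω β : Type*} [Fintype Ω] [DecidableEq β] (p : Ω → ℝ) (f : Ω → β) : β → ℝ :=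
  fun b => ∑ ω, if f ω = b then p ω else 0

/-- The entropy `H(f)` of a random variable `f` on the finite probability space `(Ω, p)`. -/
def entOf {Ω β : Type*} [Fintype Ω] [Fintype β] [DecidableEq β] (p : Ω → ℝ) (f : Ω → β) : ℝ :=
  ent (distOf p f)

/-- The conditional entropy `H(f | g)`. -/
def condEnt {Ω β γ : Type*} [Fintype Ω] [Fintype β] [Fintype γ] [DecidableEq β] [DecidableEq γ]
    (p : Ω → ℝ) (f : Ω → β) (g : Ω → γ) : ℝ :=
  entOf p (fun ω => (f ω, g ω)) - entOf p g

/-- The mutual information `I(f; g)`. -/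
def mutInfo {Ω β γ : Type*} [Fintype Ω] [Fintype β] [Fintype γ] [DecidableEq β] [DecidableEq γ]
    (p : Ω → ℝ) (f : Ω → β) (g : Ω → γ) : ℝ :=
  entOf p f + entOf p g - entOf p (fun ω => (f ω, g ω))

/-- The conditional mutual information `I(f; g | h)`. -/
def condMutInfo {Ω β γ δ : Type*} [Fintype Ω] [Fintype β] [Fintype γ] [Fintype δ]
    [DecidableEq β] [DecidableEq γ] [DecidableEq δ]
    (p : Ω → ℝ) (f : Ω → β) (g : Ω → γ) (h : Ω → δ) : ℝ :=
  entOf p (fun ω => (f ω, h ω)) + entOf p (fun ω => (g ω, h ω)) -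
    entOf p (fun ω => (f ω, g ω, h ω)) - entOf p h

/-- `p` is a probability mass function on the finite alphabet `α`. -/
def IsPMF {α : Type*} [Fintype α] (p : α → ℝ) : Prop := (∀ a, 0 ≤ p a) ∧ ∑ a, p a = 1

/-- The number `2^{nR}` of messages at blocklength `n` and rate `R` (in bits). -/
def msgSize (n : ℕ) (R : ℝ) : ℕ := max 1 ⌊(2 : ℝ) ^ ((n : ℝ) * R)⌋₊

instance (n : ℕ) (R : ℝ) : NeZero (msgSize n R) :=
  ⟨by have h : 1 ≤ msgSize n R := le_max_left _ _; omega⟩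

/-- The `ε`-typical set: `xs` is `ε`-typical for the pmf `p` if the empirical frequency of
every symbol `a` is within `ε · p a` of `p a`. -/
def Typical {α : Type*} [Fintype α] [DecidableEq α] (p : α → ℝ) (ε : ℝ) {n : ℕ}
    (xs : Fin n → α) : Prop :=
  ∀ a, |((Finset.univ.filter fun i => xs i = a).card : ℝ) / (n : ℝ) - p a| ≤ ε * p a

open Function

section Entropy

variable {Ω α β γ : Type*} [Fintype Ω] [DecidableEq α] [DecidableEq β] [DecidableEq γ] {p : Ω → ℝ}

theorem distOf_nonneg (hp : ∀ ω, 0 ≤ p ω) (f : Ω → α) (a : α) : 0 ≤ distOf p f a :=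
  Finset.sum_nonneg fun ω _ => ite_nonneg (hp ω) le_rfl

theorem sum_distOf [Fintype α] (f : Ω → α) : ∑ a, distOf p f a = ∑ ω, p ω := by
  unfold distOf
  rw [Finset.sum_comm]
  simp

theorem distOf_comp [Fintype α] (f : Ω → α) (π : α → β) (b : β) :
    distOf p (fun ω => π (f ω)) b = ∑ a, if π a = b then distOf p f a else 0 := by
  unfold distOf
  calc ∑ ω, (if π (f ω) = b then p ω else 0)
      = ∑ ω, ∑ a, if f ω = a then (if π a = b then p ω else 0) else 0 := by simp
    _ = ∑ a, if π a = b then ∑ ω, (if f ω = a then p ω else 0) else 0 := by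
        rw [Finset.sum_comm]
        refine Finset.sum_congr rfl fun a _ => ?_
        split_ifs <;> simp [*]

theorem distOf_le_distOf_comp [Fintype α] (hp : ∀ ω, 0 ≤ p ω) (f : Ω → α) (π : α → β) (a : α) :
    distOf p f a ≤ distOf p (fun ω => π (f ω)) (π a) := by
  rw [distOf_comp f π]
  simpa using Finset.single_le_sum (f := fun a' => if π a' = π a then distOf p f a' else 0)
    (fun a' _ => ite_nonneg (distOf_nonneg hp f a') le_rfl) (Finset.mem_univ a)

theorem sum_distOf_prod_left [Fintype α] (f : Ω → α) (g : Ω → β) (b : β) :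
    ∑ a, distOf p (fun ω => (f ω, g ω)) (a, b) = distOf p g b := by
  unfold distOf
  rw [Finset.sum_comm]
  simp [Prod.ext_iff, ite_and]

theorem sum_distOf_comp_mul [Fintype α] [Fintype β] (f : Ω → α) (π : α → β) (F : β → ℝ) :
    ∑ b, distOf p (fun ω => π (f ω)) b * F b = ∑ a, distOf p f a * F (π a) := by
  simp_rw [distOf_comp f π, Finset.sum_mul, ite_mul, zero_mul]
  rw [Finset.sum_comm]
  simp

theorem entOf_comp_eq_sum [Fintype α] [Fintype β] (f : Ω → α) (π : α → β) :
    entOf p (fun ω => π (f ω)) =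
      -∑ a, distOf p f a * Real.logb 2 (distOf p (fun ω => π (f ω)) (π a)) := by
  rw [← sum_distOf_comp_mul f π (fun b => Real.logb 2 (distOf p (fun ω => π (f ω)) b))]
  rfl

theorem entOf_comp_of_injective [Fintype α] [Fintype β] (f : Ω → α) {e : α → β}
    (he : Injective e) : entOf p (fun ω => e (f ω)) = entOf p f := by
  have hdist : ∀ a, distOf p (fun ω => e (f ω)) (e a) = distOf p f a := fun a => by
    simp [distOf_comp f e, he.eq_iff]
  rw [entOf_comp_eq_sum]
  simp only [hdist]
  rfl

end Entropy

theorem sub_le_mul_log_div {r s : ℝ} (hr : 0 ≤ r) (hs : 0 ≤ s) (hrs : 0 < r → 0 < s) :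
    r - s ≤ r * Real.log (r / s) := by
  rcases hr.eq_or_lt with rfl | hr
  · simpa using hs
  · have key := mul_le_mul_of_nonneg_left
      (Real.one_sub_inv_le_log_of_pos (div_pos hr (hrs hr))) hr.le
    rwa [inv_div, mul_sub, mul_one, mul_div_cancel₀ _ hr.ne'] at key

section ConditionalMutualInformation

variable {Ω α β γ δ : Type*} [Fintype Ω] [Fintype α] [Fintype β] [Fintype γ] [Fintype δ]
  [DecidableEq α] [DecidableEq β] [DecidableEq γ] [DecidableEq δ] {p : Ω → ℝ}

theorem entOf_congr {f : Ω → α} {g : Ω → β} (e : α → β) (he : Injective e)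
    (hg : ∀ ω, g ω = e (f ω)) : entOf p g = entOf p f := by
  rw [funext hg, entOf_comp_of_injective f he]

theorem condMutInfo_congr_left {f : Ω → α} {f' : Ω → δ} (g : Ω → β) (h : Ω → γ) (e : α → δ)
    (he : Injective e) (hf : ∀ ω, f' ω = e (f ω)) :
    condMutInfo p f' g h = condMutInfo p f g h := by
  have h₁ : entOf p (fun ω => (f' ω, h ω)) = entOf p (fun ω => (f ω, h ω)) :=
    entOf_congr (Prod.map e id) (he.prodMap injective_id) (fun ω => by simp [hf])
  have h₂ : entOf p (fun ω => (f' ω, g ω, h ω)) = entOf p (fun ω => (f ω, g ω, h ω)) :=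
    entOf_congr (Prod.map e id) (he.prodMap injective_id) (fun ω => by simp [hf])
  simp only [condMutInfo, h₁, h₂]

theorem condMutInfo_congr_right (f : Ω → α) (g : Ω → β) {h : Ω → γ} {h' : Ω → δ} (e : γ → δ)
    (he : Injective e) (hh : ∀ ω, h' ω = e (h ω)) :
    condMutInfo p f g h' = condMutInfo p f g h := by
  have h₁ : entOf p (fun ω => (f ω, h' ω)) = entOf p (fun ω => (f ω, h ω)) :=
    entOf_congr (Prod.map id e) (injective_id.prodMap he) (fun ω => by simp [hh])
  have h₂ : entOf p (fun ω => (g ω, h' ω)) = entOf p (fun ω => (g ω, h ω)) :=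
    entOf_congr (Prod.map id e) (injective_id.prodMap he) (fun ω => by simp [hh])
  have h₃ : entOf p (fun ω => (f ω, g ω, h' ω)) = entOf p (fun ω => (f ω, g ω, h ω)) :=
    entOf_congr (Prod.map id (Prod.map id e)) (injective_id.prodMap (injective_id.prodMap he))
      (fun ω => by simp [hh])
  simp only [condMutInfo, h₁, h₂, h₃, entOf_congr e he hh]

theorem condMutInfo_comm (f : Ω → α) (g : Ω → β) (h : Ω → γ) :
    condMutInfo p f g h = condMutInfo p g f h := by
  have hswap : entOf p (fun ω => (g ω, f ω, h ω)) = entOf p (fun ω => (f ω, g ω, h ω)) :=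
    entOf_congr (fun x => (x.2.1, x.1, x.2.2)) (fun x y hxy => by simp_all [Prod.ext_iff])
      (fun _ => rfl)
  simp only [condMutInfo, hswap]
  ring

theorem condMutInfo_prod_left (f : Ω → α) (g : Ω → β) (Y : Ω → δ) (h : Ω → γ) :
    condMutInfo p (fun ω => (f ω, g ω)) Y h =
      condMutInfo p f Y h + condMutInfo p g Y (fun ω => (f ω, h ω)) := by
  have h₁ : entOf p (fun ω => ((f ω, g ω), h ω)) = entOf p (fun ω => (g ω, f ω, h ω)) :=
    entOf_congr (fun x => ((x.2.1, x.1), x.2.2)) (fun x y hxy => by simp_all [Prod.ext_iff])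
      (fun _ => rfl)
  have h₂ : entOf p (fun ω => ((f ω, g ω), Y ω, h ω)) =
      entOf p (fun ω => (g ω, Y ω, f ω, h ω)) :=
    entOf_congr (fun x => ((x.2.2.1, x.1), x.2.1, x.2.2.2))
      (fun x y hxy => by simp_all [Prod.ext_iff]) (fun _ => rfl)
  have h₃ : entOf p (fun ω => (f ω, Y ω, h ω)) = entOf p (fun ω => (Y ω, f ω, h ω)) :=
    entOf_congr (fun x => (x.2.1, x.1, x.2.2)) (fun x y hxy => by simp_all [Prod.ext_iff])
      (fun _ => rfl)
  simp only [condMutInfo, h₁, h₂, h₃]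
  ring

theorem condMutInfo_eq_sum (hp : ∀ ω, 0 ≤ p ω) (f : Ω → α) (g : Ω → β) (h : Ω → γ) :
    condMutInfo p f g h = ∑ x : α × β × γ, distOf p (fun ω => (f ω, g ω, h ω)) x *
      Real.logb 2 (distOf p (fun ω => (f ω, g ω, h ω)) x * distOf p h x.2.2 /
        (distOf p (fun ω => (f ω, h ω)) (x.1, x.2.2) *
          distOf p (fun ω => (g ω, h ω)) (x.2.1, x.2.2))) := by
  have hfh := entOf_comp_eq_sum (p := p) (fun ω => (f ω, g ω, h ω)) (fun x => (x.1, x.2.2))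
  have hgh := entOf_comp_eq_sum (p := p) (fun ω => (f ω, g ω, h ω)) (fun x => (x.2.1, x.2.2))
  have hh := entOf_comp_eq_sum (p := p) (fun ω => (f ω, g ω, h ω)) (fun x => x.2.2)
  simp only [condMutInfo, entOf, ent] at hfh hgh hh ⊢
  rw [hfh, hgh, hh]
  simp only [← Finset.sum_neg_distrib, ← Finset.sum_sub_distrib, ← Finset.sum_add_distrib]
  refine Finset.sum_congr rfl fun x _ => ?_
  rcases (distOf_nonneg hp (fun ω => (f ω, g ω, h ω)) x).eq_or_lt with hr | hr
  · simp [← hr]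
  have hm₁ : 0 < distOf p (fun ω => (f ω, h ω)) (x.1, x.2.2) :=
    hr.trans_le (distOf_le_distOf_comp hp _ (fun x => (x.1, x.2.2)) x)
  have hm₂ : 0 < distOf p (fun ω => (g ω, h ω)) (x.2.1, x.2.2) :=
    hr.trans_le (distOf_le_distOf_comp hp _ (fun x => (x.2.1, x.2.2)) x)
  have hm₃ : 0 < distOf p h x.2.2 := hr.trans_le (distOf_le_distOf_comp hp _ (fun x => x.2.2) x)
  rw [Real.logb_div (by positivity) (by positivity), Real.logb_mul hr.ne' hm₃.ne',
    Real.logb_mul hm₁.ne' hm₂.ne']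
  ring

theorem condMutInfo_nonneg (hp : ∀ ω, 0 ≤ p ω) (f : Ω → α) (g : Ω → β) (h : Ω → γ) :
    0 ≤ condMutInfo p f g h := by
  set r := distOf p (fun ω => (f ω, g ω, h ω))
  set s : α × β × γ → ℝ := fun x => distOf p (fun ω => (f ω, h ω)) (x.1, x.2.2) *
    distOf p (fun ω => (g ω, h ω)) (x.2.1, x.2.2) / distOf p h x.2.2
  have hs : ∑ x, s x = ∑ x, r x :=
    calc ∑ x, s x = ∑ c, (∑ a, distOf p (fun ω => (f ω, h ω)) (a, c)) *
          (∑ b, distOf p (fun ω => (g ω, h ω)) (b, c)) / distOf p h c := by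
          simp only [s, Fintype.sum_prod_type, Finset.sum_mul_sum, Finset.sum_div]
          exact (Finset.sum_congr rfl fun _ _ => Finset.sum_comm).trans Finset.sum_comm
      _ = ∑ x, r x := by simp only [sum_distOf_prod_left, mul_self_div_self, sum_distOf, r]
  have hterm : ∀ x, (r x - s x) / Real.log 2 ≤ r x * Real.logb 2 (r x / s x) := by
    intro x
    have hs₀ : 0 ≤ s x := div_nonneg (mul_nonneg (distOf_nonneg hp _ _) (distOf_nonneg hp _ _))
      (distOf_nonneg hp _ _)
    have hrs : 0 < r x → 0 < s x := fun h₀ => div_pos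
      (mul_pos (h₀.trans_le (distOf_le_distOf_comp hp _ (fun x => (x.1, x.2.2)) x))
        (h₀.trans_le (distOf_le_distOf_comp hp _ (fun x => (x.2.1, x.2.2)) x)))
      (h₀.trans_le (distOf_le_distOf_comp hp _ (fun x => x.2.2) x))
    rw [Real.logb, ← mul_div_assoc]
    exact div_le_div_of_nonneg_right (sub_le_mul_log_div (distOf_nonneg hp _ x) hs₀ hrs)
      (Real.log_pos one_lt_two).le
  rw [condMutInfo_eq_sum hp]
  calc 0 = (∑ x, r x - ∑ x, s x) / Real.log 2 := by rw [hs, sub_self, zero_div]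
    _ = ∑ x, (r x - s x) / Real.log 2 := by rw [← Finset.sum_sub_distrib, Finset.sum_div]
    _ ≤ ∑ x, r x * Real.logb 2 (r x / s x) := Finset.sum_le_sum fun x _ => hterm x
    _ = _ := by simp only [s, div_div_eq_mul_div]; rfl

theorem condMutInfo_eq_zero_of_factorization (hp : ∀ ω, 0 ≤ p ω)
    (f : Ω → α) (g : Ω → β) (h : Ω → γ)
    (hfac : ∀ a b c, distOf p (fun ω => (f ω, g ω, h ω)) (a, b, c) * distOf p h c =
      distOf p (fun ω => (f ω, h ω)) (a, c) * distOf p (fun ω => (g ω, h ω)) (b, c)) :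
    condMutInfo p f g h = 0 := by
  rw [condMutInfo_eq_sum hp]
  refine Finset.sum_eq_zero fun ⟨a, b, c⟩ _ => ?_
  dsimp only
  rw [hfac a b c]
  by_cases hm : distOf p (fun ω => (f ω, h ω)) (a, c) * distOf p (fun ω => (g ω, h ω)) (b, c) = 0
  · simp [hm]
  · simp [div_self hm]

theorem condMutInfo_le_of_condMutInfo_eq_zero (hp : ∀ ω, 0 ≤ p ω) (f : Ω → α) (Y : Ω → δ)
    (g : Ω → β) (h : Ω → γ) (hfg : condMutInfo p f g h = 0) :
    condMutInfo p f Y h ≤ condMutInfo p f Y (fun ω => (g ω, h ω)) := by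
  -- expand `I((Y, g); f | h)` by the chain rule in both orders
  have hYg := condMutInfo_prod_left (p := p) Y g f h
  have hgY := condMutInfo_prod_left (p := p) g Y f h
  have hswap : condMutInfo p (fun ω => (Y ω, g ω)) f h =
      condMutInfo p (fun ω => (g ω, Y ω)) f h :=
    condMutInfo_congr_left f h Prod.swap Prod.swap_injective (fun _ => rfl)
  have hnonneg := condMutInfo_nonneg hp g f (fun ω => (Y ω, h ω))
  rw [condMutInfo_comm g f h, hfg] at hgY
  rw [condMutInfo_comm f Y h, condMutInfo_comm f Y]
  linarith

end ConditionalMutualInformation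

section Restrict

variable {ι : Type*} [DecidableEq ι] {π : ι → Type*}

theorem restrict₂_prod_injective {s t u : Finset ι} (hs : s ⊆ u) (ht : t ⊆ u)
    (hu : u ⊆ s ∪ t) :
    Injective fun w : (i : u) → π i => (Finset.restrict₂ hs w, Finset.restrict₂ ht w) := by
  intro w w' h
  simp only [Prod.mk.injEq] at h
  funext i
  rcases Finset.mem_union.mp (hu i.2) with hi | hi
  · exact congrFun h.1 ⟨i, hi⟩
  · exact congrFun h.2 ⟨i, hi⟩

theorem restrict₂_prod_prod_injective {γ : Type*} {s t u : Finset ι} (hs : s ⊆ u) (ht : t ⊆ u)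
    (hu : u ⊆ s ∪ t) :
    Injective fun w : ((i : u) → π i) × γ =>
      (Finset.restrict₂ hs w.1, Finset.restrict₂ ht w.1, w.2) := by
  rintro ⟨w, c⟩ ⟨w', c'⟩ h
  simp only [Prod.mk.injEq] at h
  obtain ⟨h₁, h₂, rfl⟩ := h
  rw [restrict₂_prod_injective hs ht hu (Prod.ext h₁ h₂)]

end Restrict

section RestrictIndicator

variable {ι : Type*} [DecidableEq ι] {π : ι → Type*} [∀ i, DecidableEq (π i)]

def restrictIndicator (A : Finset ι) (a : (i : A) → π i) (i : ι) (t : π i) : ℝ :=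
  if h : i ∈ A then if t = a ⟨i, h⟩ then 1 else 0 else 1

theorem restrictIndicator_of_notMem {A : Finset ι} (a : (i : A) → π i) {i : ι} (hi : i ∉ A) :
    restrictIndicator A a i = fun _ => 1 := by
  ext t
  simp [restrictIndicator, hi]

theorem prod_restrictIndicator [Fintype ι] (A : Finset ι) (a : (i : A) → π i) (x : ∀ i, π i) :
    ∏ i, restrictIndicator A a i (x i) = if A.restrict x = a then 1 else 0 := by
  rw [← Finset.prod_subset (Finset.subset_univ A)
    (fun i _ hi => by rw [restrictIndicator_of_notMem a hi]), ← Finset.prod_attach A]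
  simp [restrictIndicator, Finset.prod_boole, funext_iff]

end RestrictIndicator

section SingleLetter

variable {K : ℕ} {Q Yo : Type*} {X : Fin K → Type*}
  [Fintype Q] [DecidableEq Q] [Fintype Yo] [DecidableEq Yo]
  [∀ k, Fintype (X k)] [∀ k, DecidableEq (X k)]

variable (pQ : Q → ℝ) (pX : ∀ k, Q → X k → ℝ) (W : (∀ k, X k) → Yo → ℝ)

/-- The joint distribution of `(Q, X_{[K]}, Y1)` with
`p(q, x_{[K]}, y1) = p(q) p(x1|q) ⋯ p(xK|q) p(y1 | x_{[K]})`. -/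
def SjointP : Q × (∀ k, X k) × Yo → ℝ := fun z =>
  pQ z.1 * (∏ k, pX k z.1 (z.2.1 k)) * W z.2.1 z.2.2

/-- A set `S ⊆ [K]` is *decodable* if `R_T ≤ I(X_T; Y1 | X_{S \ T}, Q)` for all `T ⊆ S`. -/
def IsDecodableSet (R : Fin K → ℝ) (S : Finset (Fin K)) : Prop :=
  ∀ T ⊆ S, ∑ k ∈ T, R k ≤
    condMutInfo (SjointP pQ pX W)
      (fun z => fun k : {k // k ∈ T} => z.2.1 k.1)
      (fun z => z.2.2)
      (fun z => ((fun k : {k // k ∈ S \ T} => z.2.1 k.1), z.1))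

set_option linter.unusedSectionVars false

theorem SjointP_nonneg (hpQ : IsPMF pQ) (hpX : ∀ k q, IsPMF (pX k q)) (hW : ∀ x, IsPMF (W x))
    (z : Q × (∀ k, X k) × Yo) : 0 ≤ SjointP pQ pX W z :=
  mul_nonneg (mul_nonneg (hpQ.1 _) (Finset.prod_nonneg fun k _ => (hpX k z.1).1 _)) ((hW _).1 _)

theorem sum_ite_prod_mul_SjointP (hW : ∀ x, IsPMF (W x)) (q : Q) (φ : ∀ k, X k → ℝ) :
    ∑ z, (if z.1 = q then ∏ k, φ k (z.2.1 k) else 0) * SjointP pQ pX W z =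
      pQ q * ∏ k, ∑ t, φ k t * pX k q t := by
  rw [Fintype.sum_prod_type, Finset.sum_eq_single q (fun q' _ hq' => by simp [hq'])
    (by simp)]
  simp only [Fintype.sum_prod_type, SjointP, ← Finset.mul_sum, (hW _).2, mul_one, ↓reduceIte]
  rw [Fintype.prod_sum, Finset.mul_sum]
  exact Finset.sum_congr rfl fun x _ => by rw [Finset.prod_mul_distrib, mul_left_comm]

theorem distOf_SjointP_eq {β : Type*} [DecidableEq β] (hW : ∀ x, IsPMF (W x))
    (f : Q × (∀ k, X k) × Yo → β) (b : β) (q : Q) (φ : ∀ k, X k → ℝ)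
    (hf : ∀ z, (if f z = b then (1 : ℝ) else 0) = if z.1 = q then ∏ k, φ k (z.2.1 k) else 0) :
    distOf (SjointP pQ pX W) f b = pQ q * ∏ k, ∑ t, φ k t * pX k q t := by
  rw [← sum_ite_prod_mul_SjointP pQ pX W hW, distOf]
  refine Finset.sum_congr rfl fun z _ => ?_
  rw [← hf z, ite_mul, one_mul, zero_mul]

theorem condMutInfo_restrict_eq_zero (hpQ : IsPMF pQ) (hpX : ∀ k q, IsPMF (pX k q))
    (hW : ∀ x, IsPMF (W x)) {A B C : Finset (Fin K)} (hAB : Disjoint A B) (hAC : Disjoint A C) :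
    condMutInfo (SjointP pQ pX W) (fun z => A.restrict z.2.1) (fun z => B.restrict z.2.1)
      (fun z => (C.restrict z.2.1, z.1)) = 0 := by
  refine condMutInfo_eq_zero_of_factorization (SjointP_nonneg pQ pX W hpQ hpX hW) _ _ _
    fun a b ⟨c, q⟩ => ?_
  rw [distOf_SjointP_eq pQ pX W hW _ _ q (fun k t => restrictIndicator A a k t *
      restrictIndicator B b k t * restrictIndicator C c k t) ?_,
    distOf_SjointP_eq pQ pX W hW _ _ q (restrictIndicator C c) ?_,
    distOf_SjointP_eq pQ pX W hW _ _ q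
      (fun k t => restrictIndicator A a k t * restrictIndicator C c k t) ?_,
    distOf_SjointP_eq pQ pX W hW _ _ q
      (fun k t => restrictIndicator B b k t * restrictIndicator C c k t) ?_,
    mul_mul_mul_comm, mul_mul_mul_comm _ _ (pQ q), ← Finset.prod_mul_distrib,
    ← Finset.prod_mul_distrib]
  · congr 1
    refine Finset.prod_congr rfl fun k _ => ?_
    by_cases hA : k ∈ A
    · simp [restrictIndicator_of_notMem _ (Finset.disjoint_left.mp hAB hA),
        restrictIndicator_of_notMem _ (Finset.disjoint_left.mp hAC hA)]
    · simp only [restrictIndicator_of_notMem _ hA, one_mul]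
      ring
  all_goals
    intro z
    simp only [Finset.prod_mul_distrib, prod_restrictIndicator, Prod.mk.injEq]
    split_ifs <;> simp_all

theorem condMutInfo_restrict_le_of_subset (hpQ : IsPMF pQ) (hpX : ∀ k q, IsPMF (pX k q))
    (hW : ∀ x, IsPMF (W x)) {T C N : Finset (Fin K)} (hTN : Disjoint T N) (hCN : C ⊆ N) :
    condMutInfo (SjointP pQ pX W) (fun z => T.restrict z.2.1) (fun z => z.2.2)
        (fun z => (C.restrict z.2.1, z.1)) ≤
      condMutInfo (SjointP pQ pX W) (fun z => T.restrict z.2.1) (fun z => z.2.2)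
        (fun z => (N.restrict z.2.1, z.1)) :=
  calc _ ≤ condMutInfo (SjointP pQ pX W) (fun z => T.restrict z.2.1) (fun z => z.2.2)
        (fun z => ((N \ C).restrict z.2.1, C.restrict z.2.1, z.1)) :=
        condMutInfo_le_of_condMutInfo_eq_zero (SjointP_nonneg pQ pX W hpQ hpX hW) _ _ _ _
          (condMutInfo_restrict_eq_zero pQ pX W hpQ hpX hW
            (hTN.mono_right Finset.sdiff_subset) (hTN.mono_right hCN))
    _ = _ := condMutInfo_congr_right _ _ _
        (restrict₂_prod_prod_injective Finset.sdiff_subset hCN (by simp)) (fun _ => rfl)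

theorem condMutInfo_restrict_union (T₁ T₂ N : Finset (Fin K)) :
    condMutInfo (SjointP pQ pX W) (fun z => (T₁ ∪ T₂).restrict z.2.1) (fun z => z.2.2)
        (fun z => (N.restrict z.2.1, z.1)) =
      condMutInfo (SjointP pQ pX W) (fun z => T₁.restrict z.2.1) (fun z => z.2.2)
          (fun z => (N.restrict z.2.1, z.1)) +
        condMutInfo (SjointP pQ pX W) (fun z => T₂.restrict z.2.1) (fun z => z.2.2)
          (fun z => ((T₁ ∪ N).restrict z.2.1, z.1)) := by
  have hsplit := condMutInfo_congr_left (p := SjointP pQ pX W)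
    (f := fun z => (T₁ ∪ T₂).restrict z.2.1)
    (f' := fun z => (T₁.restrict z.2.1, T₂.restrict z.2.1))
    (fun z => z.2.2) (fun z => (N.restrict z.2.1, z.1)) _
    (restrict₂_prod_injective Finset.subset_union_left Finset.subset_union_right subset_rfl)
    (fun _ => rfl)
  have hmerge := condMutInfo_congr_right (p := SjointP pQ pX W)
    (h := fun z => ((T₁ ∪ N).restrict z.2.1, z.1))
    (h' := fun z => (T₁.restrict z.2.1, N.restrict z.2.1, z.1))
    (fun z => T₂.restrict z.2.1) (fun z => z.2.2) _
    (restrict₂_prod_prod_injective Finset.subset_union_left Finset.subset_union_right subset_rfl)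
    (fun _ => rfl)
  rw [← hsplit, condMutInfo_prod_left, hmerge]

theorem union_of_decodable_sets
    (hpQ : IsPMF pQ) (hpX : ∀ k q, IsPMF (pX k q)) (hW : ∀ x, IsPMF (W x))
    (R : Fin K → ℝ) (S1 S2 : Finset (Fin K))
    (h1 : IsDecodableSet pQ pX W R S1) (h2 : IsDecodableSet pQ pX W R S2) :
    IsDecodableSet pQ pX W R (S1 ∪ S2) := by
  intro T hT
  have hle₁ := (h1 (T ∩ S1) Finset.inter_subset_right).trans
    (condMutInfo_restrict_le_of_subset pQ pX W hpQ hpX hW (N := (S1 ∪ S2) \ T)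
      (by grind [Finset.disjoint_left]) (by grind))
  have hle₂ := (h2 (T \ S1) (by grind)).trans
    (condMutInfo_restrict_le_of_subset pQ pX W hpQ hpX hW (N := T ∩ S1 ∪ (S1 ∪ S2) \ T)
      (by grind [Finset.disjoint_left]) (by grind))
  have hchain := condMutInfo_restrict_union pQ pX W (T ∩ S1) (T \ S1) ((S1 ∪ S2) \ T)
  rw [Finset.union_comm (T ∩ S1), Finset.sdiff_union_inter] at hchain
  rw [← Finset.sum_inter_add_sum_sdiff T S1 R]
  exact (add_le_add hle₁ hle₂).trans_eq hchain.symm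

end SingleLetter
end
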